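/- Let 𝓡 be a compact set of symmetric positive definite k×k real matrices. Then there exist constants C, c > 0 such that for every R ∈ 𝓡, every λ ∈ ℝ^k, and every y ∈ {0,1}^k: ∫_{ℝ^k} ∏_{i=1}^k 1_{I_{y_i}}(x_i + λ_i) · φ_R(x) dx ≥ C·exp(−c·‖λ‖₂²). -/

import Mathlib

open MeasureTheory Real Matrix

/-- The centered Gaussian density on `ℝ^k` with covariance matrix `R`:
`φ_R(x) = ((2π)^k det R)^{-1/2} exp(−(1/2) xᵀ R⁻¹ x)`. -/
noncomputable def gaussDensity {k : ℕ} (R : Matrix (Fin k) (Fin k) ℝ) (x : Fin k → ℝ) : ℝ :=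
  (Real.sqrt ((2 * Real.pi) ^ k * R.det))⁻¹ * Real.exp (-(1 / 2) * (x ⬝ᵥ R⁻¹ *ᵥ x))

/-- The half-line `I_0 = (−∞,0]`, `I_1 = (0,∞)`, indexed by a boolean. -/
noncomputable def halfLine (b : Bool) : Set ℝ := if b then Set.Ioi 0 else Set.Iic 0

/-!
Intersect the orthant `{x | x_i + λ_i ∈ I_{y_i}}` with the unit cube `|x_i + λ_i| ≤ 1`: the result
has volume one, and on it `‖x‖_∞ ≤ ‖λ‖_∞ + 1`, so `xᵀR⁻¹x ≤ (∑ᵢⱼ |R⁻¹ᵢⱼ|)·2(‖λ‖₂² + 1)`.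
Since `R ↦ det R` and `R ↦ ∑ᵢⱼ |R⁻¹ᵢⱼ|` are continuous on the compact set `𝓡`, they are bounded
there, which bounds `φ_R` from below on that cube uniformly in `R`.
-/

section QuadraticForm

variable {ι : Type*} [Fintype ι]

theorem Matrix.PosDef.exists_pos_mul_sum_sq_le {A : Matrix ι ι ℝ} (hA : A.PosDef) :
    ∃ ε > 0, ∀ x : ι → ℝ, ε * ∑ i, x i ^ 2 ≤ x ⬝ᵥ A *ᵥ x := by
  let q : EuclideanSpace ℝ ι → ℝ := fun u => WithLp.ofLp u ⬝ᵥ A *ᵥ WithLp.ofLp u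
  have hq : Continuous q := by fun_prop
  obtain ⟨ε, hε, hmin⟩ := (isCompact_sphere (0 : EuclideanSpace ℝ ι) 1).exists_forall_le'
    hq.continuousOn (a := 0) fun u hu => by
      have : WithLp.ofLp u ≠ 0 := by simpa using ne_zero_of_mem_unit_sphere ⟨u, hu⟩
      simpa using hA.dotProduct_mulVec_pos this
  refine ⟨ε, hε, fun x => ?_⟩
  obtain rfl | hx := eq_or_ne x 0
  · simp
  set u := WithLp.toLp 2 x
  have hu : ‖u‖ ≠ 0 := by simpa [u] using hx
  have hqu : q u = ‖u‖ ^ 2 * q (‖u‖⁻¹ • u) := by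
    simp only [q, WithLp.ofLp_smul, smul_dotProduct, mulVec_smul, dotProduct_smul, smul_eq_mul]
    field_simp
  have hsum : ‖u‖ ^ 2 = ∑ i, x i ^ 2 := EuclideanSpace.real_norm_sq_eq u
  calc ε * ∑ i, x i ^ 2 = ‖u‖ ^ 2 * ε := by rw [hsum, mul_comm]
    _ ≤ ‖u‖ ^ 2 * q (‖u‖⁻¹ • u) := by
        gcongr
        exact hmin _ (by simp [norm_smul, hu])
    _ = x ⬝ᵥ A *ᵥ x := hqu.symm

theorem dotProduct_mulVec_le_sum_abs_mul_norm_sq (A : Matrix ι ι ℝ) (x : ι → ℝ) :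
    x ⬝ᵥ A *ᵥ x ≤ (∑ i, ∑ j, |A i j|) * ‖x‖ ^ 2 := by
  calc x ⬝ᵥ A *ᵥ x = ∑ i, ∑ j, A i j * (x i * x j) := by
        simp only [dotProduct, mulVec, Finset.mul_sum]; congr! 2; ring
    _ ≤ ∑ i, ∑ j, |A i j| * ‖x‖ ^ 2 := by
        refine Finset.sum_le_sum fun i _ => Finset.sum_le_sum fun j _ => ?_
        refine (le_abs_self _).trans ?_
        rw [abs_mul, abs_mul, sq]
        gcongr
        · exact norm_le_pi_norm x i
        · exact norm_le_pi_norm x j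
    _ = (∑ i, ∑ j, |A i j|) * ‖x‖ ^ 2 := by simp only [Finset.sum_mul]

theorem norm_sq_le_sum_sq (x : ι → ℝ) : ‖x‖ ^ 2 ≤ ∑ i, x i ^ 2 := by
  have : ‖x‖ ≤ √(∑ i, x i ^ 2) := (pi_norm_le_iff_of_nonneg (by positivity)).2 fun i =>
    abs_le_sqrt (Finset.single_le_sum (fun j _ => sq_nonneg (x j)) (Finset.mem_univ i))
  calc ‖x‖ ^ 2 ≤ √(∑ i, x i ^ 2) ^ 2 := by gcongr
    _ = ∑ i, x i ^ 2 := sq_sqrt (by positivity)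

theorem continuousOn_matrix_inv [DecidableEq ι] {s : Set (Matrix ι ι ℝ)}
    (hs : ∀ A ∈ s, A.det ≠ 0) : ContinuousOn Inv.inv s := fun A hA =>
  (continuousAt_matrix_inv A <| by
    rw [Ring.inverse_eq_inv']; exact continuousAt_inv₀ (hs A hA)).continuousWithinAt

end QuadraticForm

theorem measurableSet_halfLine (b : Bool) : MeasurableSet (halfLine b) := by
  cases b <;> simp [halfLine, measurableSet_Ioi, measurableSet_Iic]

theorem volume_halfLine_inter_Icc (b : Bool) : volume (halfLine b ∩ Set.Icc (-1) 1) = 1 := by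
  cases b
  · rw [show halfLine false ∩ Set.Icc (-1) 1 = Set.Icc (-1) 0 by
      ext; simp [halfLine, and_comm]; grind]
    simp
  · rw [show halfLine true ∩ Set.Icc (-1) 1 = Set.Ioc 0 1 by
      ext; simp [halfLine]; grind]
    simp

section OrthantCube

variable {ι : Type*} [Fintype ι]

def orthantCube (lam : ι → ℝ) (y : ι → Bool) : Set (ι → ℝ) :=
  Set.univ.pi fun i => (· + lam i) ⁻¹' (halfLine (y i) ∩ Set.Icc (-1) 1)

variable {lam : ι → ℝ} {y : ι → Bool}

theorem measurableSet_orthantCube : MeasurableSet (orthantCube lam y) :=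
  .univ_pi fun i =>
    (measurable_add_const (lam i)) ((measurableSet_halfLine _).inter measurableSet_Icc)

theorem volume_orthantCube : volume (orthantCube lam y) = 1 := by
  simp only [orthantCube, volume_pi_pi, measure_preimage_add_right, volume_halfLine_inter_Icc,
    Finset.prod_const_one]

theorem norm_le_of_mem_orthantCube {x : ι → ℝ} (hx : x ∈ orthantCube lam y) :
    ‖x‖ ≤ ‖lam‖ + 1 := by
  refine (pi_norm_le_iff_of_nonneg (by positivity)).2 fun i => ?_
  have hxi : |x i + lam i| ≤ 1 := abs_le.2 (hx i trivial).2
  calc ‖x i‖ = |(x i + lam i) - lam i| := by simp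
    _ ≤ |x i + lam i| + |lam i| := abs_sub _ _
    _ ≤ 1 + ‖lam‖ := add_le_add hxi (norm_le_pi_norm lam i)
    _ = ‖lam‖ + 1 := add_comm _ _

theorem norm_sq_le_of_mem_orthantCube {x : ι → ℝ} (hx : x ∈ orthantCube lam y) :
    ‖x‖ ^ 2 ≤ 2 * (∑ i, lam i ^ 2 + 1) :=
  calc ‖x‖ ^ 2 ≤ (‖lam‖ + 1) ^ 2 := by gcongr; exact norm_le_of_mem_orthantCube hx
    _ ≤ 2 * (‖lam‖ ^ 2 + 1) := by nlinarith [sq_nonneg (‖lam‖ - 1)]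
    _ ≤ 2 * (∑ i, lam i ^ 2 + 1) := by gcongr; exact norm_sq_le_sum_sq lam

theorem le_integral_prod_indicator_mul {f : (ι → ℝ) → ℝ} (hf : Integrable f) (hf0 : 0 ≤ f)
    {L : ℝ} (hL : ∀ x ∈ orthantCube lam y, L ≤ f x) :
    L ≤ ∫ x, (∏ i, (halfLine (y i)).indicator (fun _ => (1 : ℝ)) (x i + lam i)) * f x := by
  set g : (ι → ℝ) → ℝ := fun x => ∏ i, (halfLine (y i)).indicator (fun _ => (1 : ℝ)) (x i + lam i)
  have hg0 : ∀ x, 0 ≤ g x := fun x =>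
    Finset.prod_nonneg fun i _ => Set.indicator_nonneg (fun _ _ => zero_le_one) _
  have hg1 : ∀ x, g x ≤ 1 := fun x => Finset.prod_le_one (fun i _ => Set.indicator_nonneg
    (fun _ _ => zero_le_one) _) fun i _ => Set.indicator_le_self' (fun _ _ => zero_le_one) _
  have hgf : Integrable fun x => g x * f x := by
    refine hf.bdd_mul (c := 1) ?_
      (.of_forall fun x => by simpa [abs_of_nonneg (hg0 x)] using hg1 x)
    exact (Finset.measurable_prod _ fun i _ => (measurable_const.indicator
      (measurableSet_halfLine _)).comp (by fun_prop)).aestronglyMeasurable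
  calc L = ∫ x, (orthantCube lam y).indicator (fun _ => L) x := by
        simp [integral_indicator_const _ measurableSet_orthantCube, measureReal_def,
          volume_orthantCube]
    _ ≤ ∫ x, g x * f x := by
        have hL_int : IntegrableOn (fun _ => L) (orthantCube lam y) :=
          integrableOn_const (by simp [volume_orthantCube])
        refine integral_mono (hL_int.integrable_indicator measurableSet_orthantCube) hgf
          fun x => ?_
        by_cases hx : x ∈ orthantCube lam y
        · have : g x = 1 := Finset.prod_eq_one fun i _ => Set.indicator_of_mem (hx i trivial).1 _
          simpa [hx, this] using hL x hx
        · simpa [hx] using mul_nonneg (hg0 x) (hf0 x)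

end OrthantCube

section GaussDensity

variable {k : ℕ} (R : Matrix (Fin k) (Fin k) ℝ)

theorem continuous_gaussDensity : Continuous (gaussDensity R) := by
  unfold gaussDensity; fun_prop

theorem gaussDensity_nonneg (x : Fin k → ℝ) : 0 ≤ gaussDensity R x := by
  unfold gaussDensity; positivity

variable {R}

theorem integrable_gaussDensity (hR : R.PosDef) : Integrable (gaussDensity R) := by
  obtain ⟨ε, hε, hq⟩ := hR.inv.exists_pos_mul_sum_sq_le
  have hprod : Integrable fun x : Fin k → ℝ => ∏ i, exp (-(ε / 2) * x i ^ 2) :=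
    Integrable.fintype_prod (f := fun _ t => exp (-(ε / 2) * t ^ 2))
      fun _ => integrable_exp_neg_mul_sq (by positivity)
  refine (hprod.const_mul (√((2 * π) ^ k * R.det))⁻¹).mono
    (continuous_gaussDensity R).aestronglyMeasurable (.of_forall fun x => ?_)
  rw [norm_of_nonneg (gaussDensity_nonneg R x), norm_of_nonneg (by positivity), gaussDensity,
    ← exp_sum]
  gcongr
  have := hq x
  rw [← Finset.mul_sum]
  nlinarith

theorem inv_sqrt_mul_exp_le_gaussDensity (hdet : 0 < R.det) {D M : ℝ} (hD : R.det ≤ D)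
    (hM : ∑ i, ∑ j, |R⁻¹ i j| ≤ M) (x : Fin k → ℝ) :
    (√((2 * π) ^ k * D))⁻¹ * exp (-(M / 2) * ‖x‖ ^ 2) ≤ gaussDensity R x := by
  have hq := dotProduct_mulVec_le_sum_abs_mul_norm_sq R⁻¹ x
  unfold gaussDensity
  gcongr ?_ * exp ?_
  · exact inv_anti₀ (sqrt_pos.2 (mul_pos (by positivity) hdet)) (by gcongr)
  · nlinarith [sq_nonneg ‖x‖]

end GaussDensity

theorem stmt7_general (k : ℕ) (𝓡 : Set (Matrix (Fin k) (Fin k) ℝ))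
    (hcomp : IsCompact 𝓡) (hpd : ∀ R ∈ 𝓡, R.PosDef) :
    ∃ C c : ℝ, 0 < C ∧ 0 < c ∧
      ∀ R ∈ 𝓡, ∀ lam : Fin k → ℝ, ∀ y : Fin k → Bool,
        C * Real.exp (-c * ∑ i, lam i ^ 2) ≤
          ∫ x : Fin k → ℝ,
            (∏ i, Set.indicator (halfLine (y i)) (fun _ => (1 : ℝ)) (x i + lam i)) *
              gaussDensity R x := by
  obtain ⟨D, hD⟩ := hcomp.bddAbove_image continuous_id.matrix_det.continuousOn
  have hinv : ContinuousOn Inv.inv 𝓡 := continuousOn_matrix_inv fun R hR => (hpd R hR).det_pos.ne'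
  obtain ⟨M, hM⟩ := hcomp.bddAbove_image
    (f := fun R : Matrix (Fin k) (Fin k) ℝ => ∑ i, ∑ j, |R⁻¹ i j|) (by fun_prop)
  refine ⟨(√((2 * π) ^ k * max D 1))⁻¹ * exp (-max M 1), max M 1, by positivity, by positivity,
    fun R hR lam y => le_integral_prod_indicator_mul (integrable_gaussDensity (hpd R hR))
      (gaussDensity_nonneg R) fun x hx => ?_⟩
  refine le_trans ?_ (inv_sqrt_mul_exp_le_gaussDensity (hpd R hR).det_pos
    ((hD ⟨R, hR, rfl⟩).trans (le_max_left _ 1)) ((hM ⟨R, hR, rfl⟩).trans (le_max_left _ 1)) x)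
  rw [mul_assoc, ← exp_add]
  gcongr
  nlinarith [mul_le_mul_of_nonneg_left (norm_sq_le_of_mem_orthantCube hx)
    (by positivity : (0 : ℝ) ≤ max M 1 / 2)]

/-- For a compact set `𝓡` of symmetric positive definite `k×k` matrices, there are constants
`C, c > 0` such that for every `R ∈ 𝓡`, `λ ∈ ℝ^k` and `y ∈ {0,1}^k`,
`∫_{ℝ^k} ∏_i 1_{I_{y_i}}(x_i + λ_i) φ_R(x) dx ≥ C·exp(−c‖λ‖₂²)`. -/
theorem stmt7 (k : ℕ) (𝓡 : Set (Matrix (Fin k) (Fin k) ℝ))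
    (hcomp : IsCompact 𝓡) (hsymm : ∀ R ∈ 𝓡, R.IsSymm) (hpd : ∀ R ∈ 𝓡, R.PosDef) :
    ∃ C c : ℝ, 0 < C ∧ 0 < c ∧
      ∀ R ∈ 𝓡, ∀ lam : Fin k → ℝ, ∀ y : Fin k → Bool,
        C * Real.exp (-c * ∑ i, lam i ^ 2) ≤
          ∫ x : Fin k → ℝ,
            (∏ i, Set.indicator (halfLine (y i)) (fun _ => (1 : ℝ)) (x i + lam i)) *
              gaussDensity R x :=
  stmt7_general k 𝓡 hcomp hpd
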